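/- Let g:[0,1]→ℝ^d be a rectifiable curve with ℋ¹(Im g) = 𝓛(g). Then Card(g^{−1}({y})) = 1 for ℋ¹-almost every y ∈ Im g; that is, the set {y ∈ Im g : Card(g^{−1}({y})) > 1} is negligible for the trace of ℋ¹ on Im g. -/

import Mathlib

/-!
Split `[0, 1]` at a rational `q`. Through its arc-length parametrization, `g` restricted to
`[0, q]` is a `1`-Lipschitz image of an interval of length `𝓛(g|[0,q])`, so
`ℋ¹(g [0,q]) ≤ 𝓛(g|[0,q])`, and likewise on `[q, 1]`. These two lengths add up to
`𝓛(g) = ℋ¹(Im g)`, so inclusion–exclusion forces `ℋ¹(g [0,q] ∩ g [q,1]) = 0`. A point with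
two preimages `t₁ < t₂` lies in this overlap for any rational `q ∈ (t₁, t₂)`, and there are
countably many such `q`.
-/

open MeasureTheory Set
open scoped ENNReal NNReal

theorem HasConstantSpeedOnWith.lipschitzOnWith {E : Type*} [PseudoEMetricSpace E] {f : ℝ → E}
    {s : Set ℝ} {l : ℝ≥0} (h : HasConstantSpeedOnWith f s l) : LipschitzOnWith l f s := by
  have hle : ∀ ⦃x⦄, x ∈ s → ∀ ⦃y⦄, y ∈ s → x ≤ y → edist (f x) (f y) ≤ l * edist x y := by
    intro x hx y hy hxy
    calc edist (f x) (f y) ≤ eVariationOn f (s ∩ Icc x y) :=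
          eVariationOn.edist_le f ⟨hx, le_rfl, hxy⟩ ⟨hy, hxy, le_rfl⟩
      _ = l * edist x y := by
          rw [h hx hy, edist_comm, edist_dist, Real.dist_eq, abs_of_nonneg (sub_nonneg.2 hxy),
            ENNReal.ofReal_mul l.coe_nonneg, ENNReal.ofReal_coe_nnreal]
  intro x hx y hy
  rcases le_total x y with hxy | hyx
  · exact hle hx hy hxy
  · rw [edist_comm, edist_comm x]
    exact hle hy hx hyx

/-- Inclusion–exclusion, applied to measurable hulls, needs no measurability of `s` or `t`. -/
theorem measure_inter_eq_zero_of_add_le_union {α : Type*} [MeasurableSpace α] {μ : Measure α}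
    {s t : Set α} (h : μ s + μ t ≤ μ (s ∪ t)) (hfin : μ (s ∪ t) ≠ ∞) : μ (s ∩ t) = 0 := by
  set s' := toMeasurable μ s
  set t' := toMeasurable μ t
  have hunion : μ (s' ∪ t') ≤ μ (s ∪ t) := by
    calc μ (s' ∪ t') ≤ μ s' + μ t' := measure_union_le _ _
      _ = μ s + μ t := by rw [measure_toMeasurable, measure_toMeasurable]
      _ ≤ μ (s ∪ t) := h
  have hsum : μ (s' ∪ t') + μ (s' ∩ t') ≤ μ (s' ∪ t') + 0 := by
    calc μ (s' ∪ t') + μ (s' ∩ t') = μ s + μ t := by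
          rw [measure_union_add_inter _ (measurableSet_toMeasurable μ t), measure_toMeasurable,
            measure_toMeasurable]
      _ ≤ μ (s ∪ t) := h
      _ ≤ μ (s' ∪ t') + 0 := by
          rw [add_zero]
          exact measure_mono (union_subset_union (subset_toMeasurable μ s) (subset_toMeasurable μ t))
  refine measure_mono_null (inter_subset_inter (subset_toMeasurable μ s) (subset_toMeasurable μ t))
    (nonpos_iff_eq_zero.1 (ENNReal.le_of_add_le_add_left (ne_top_of_le_ne_top hfin hunion) hsum))

variable {E : Type*} [EMetricSpace E] [MeasurableSpace E] [BorelSpace E]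

theorem hausdorffMeasure_image_le_eVariationOn (f : ℝ → E) (s : Set ℝ) :
    μH[1] (f '' s) ≤ eVariationOn f s := by
  by_cases hfin : eVariationOn f s = ∞
  · exact hfin ▸ le_top
  rcases s.eq_empty_or_nonempty with rfl | ⟨a, ha⟩
  · simp
  have hf : LocallyBoundedVariationOn f s := BoundedVariationOn.locallyBoundedVariationOn hfin
  set v := variationOnFromTo f s a
  have himage : f '' s = naturalParameterization f s a '' (v '' s) := by
    rw [← image_comp]
    exact image_congr fun b hb =>
      (edist_eq_zero.1 (edist_naturalParameterization_eq_zero hf ha hb)).symm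
  have hdiam : Metric.ediam (v '' s) ≤ eVariationOn f s := by
    refine Metric.ediam_le ?_
    rintro _ ⟨b, hb, rfl⟩ _ ⟨c, hc, rfl⟩
    rw [edist_dist, Real.dist_eq, variationOnFromTo.sub_right hf ha hb hc,
      ← ENNReal.ofReal_toReal hfin]
    exact ENNReal.ofReal_le_ofReal (variationOnFromTo.abs_le_eVariationOn hfin)
  calc μH[1] (f '' s) = μH[1] (naturalParameterization f s a '' (v '' s)) := by rw [himage]
    _ ≤ μH[1] (v '' s) := by
      simpa using ((has_unit_speed_naturalParameterization f hf ha).lipschitzOnWith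
        ).hausdorffMeasure_image_le zero_le_one
    _ = volume (v '' s) := by rw [hausdorffMeasure_real]
    _ ≤ Metric.ediam (v '' s) := Real.volume_le_diam _
    _ ≤ eVariationOn f s := hdiam

theorem hausdorffMeasure_image_Icc_inter_image_Icc_eq_zero (f : ℝ → E) {a c : ℝ}
    (hfin : eVariationOn f (Icc a c) ≠ ∞) (hlen : μH[1] (f '' Icc a c) = eVariationOn f (Icc a c))
    (b : ℝ) : μH[1] (f '' Icc a b ∩ f '' Icc b c) = 0 := by
  rcases lt_or_ge b a with hba | hab
  · simp [Icc_eq_empty_of_lt hba]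
  rcases lt_or_ge c b with hcb | hbc
  · simp [Icc_eq_empty_of_lt hcb]
  have hunion : f '' Icc a b ∪ f '' Icc b c = f '' Icc a c := by
    rw [← image_union, Icc_union_Icc_eq_Icc hab hbc]
  have hvar : eVariationOn f (Icc a b) + eVariationOn f (Icc b c) = eVariationOn f (Icc a c) := by
    simpa using eVariationOn.Icc_add_Icc f (s := univ) hab hbc (mem_univ b)
  refine measure_inter_eq_zero_of_add_le_union ?_ (by rwa [hunion, hlen])
  calc μH[1] (f '' Icc a b) + μH[1] (f '' Icc b c)
      ≤ eVariationOn f (Icc a b) + eVariationOn f (Icc b c) :=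
        add_le_add (hausdorffMeasure_image_le_eVariationOn f _)
          (hausdorffMeasure_image_le_eVariationOn f _)
    _ = μH[1] (f '' Icc a b ∪ f '' Icc b c) := by rw [hvar, hunion, hlen]

theorem setOf_one_lt_encard_fiber_subset_iUnion_rat {X : Type*} (f : ℝ → X) (a c : ℝ) :
    {y | 1 < {t ∈ Icc a c | f t = y}.encard} ⊆ ⋃ q : ℚ, f '' Icc a q ∩ f '' Icc (q : ℝ) c := by
  intro y hy
  obtain ⟨t₁, t₂, ⟨ht₁, hy₁⟩, ⟨ht₂, hy₂⟩, hne⟩ := one_lt_encard_iff.1 hy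
  wlog hlt : t₁ < t₂ generalizing t₁ t₂
  · exact this t₂ t₁ ht₂ hy₂ hne.symm ht₁ hy₁ (hne.lt_or_gt.resolve_left hlt)
  obtain ⟨q, hq₁, hq₂⟩ := exists_rat_btwn hlt
  exact mem_iUnion.2 ⟨q, ⟨t₁, ⟨ht₁.1, hq₁.le⟩, hy₁⟩, ⟨t₂, ⟨hq₂.le, ht₂.2⟩, hy₂⟩⟩

theorem statement_11_general {d : ℕ}
    (g : ℝ → EuclideanSpace ℝ (Fin d))
    (hrect : eVariationOn g (Set.Icc 0 1) ≠ ⊤)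
    (hlen : μH[1] (g '' Set.Icc 0 1) = eVariationOn g (Set.Icc 0 1)) :
    μH[1] {y ∈ g '' Set.Icc 0 1 | 1 < {t ∈ Set.Icc (0:ℝ) 1 | g t = y}.encard} = 0 :=
  measure_mono_null (fun _ hy => setOf_one_lt_encard_fiber_subset_iUnion_rat g 0 1 hy.2)
    (measure_iUnion_null fun q => hausdorffMeasure_image_Icc_inter_image_Icc_eq_zero g hrect hlen q)

/-- For a rectifiable curve `g : [0,1] → ℝ^d` with
`ℋ¹(Im g) = 𝓛(g)`, the set of points `y ∈ Im g` with more than one preimage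
`{t ∈ [0,1] | g t = y}` is `ℋ¹`-negligible. -/
theorem statement_11 {d : ℕ}
    (g : ℝ → EuclideanSpace ℝ (Fin d)) (hg : ContinuousOn g (Set.Icc 0 1))
    (hrect : eVariationOn g (Set.Icc 0 1) ≠ ⊤)
    (hlen : μH[1] (g '' Set.Icc 0 1) = eVariationOn g (Set.Icc 0 1)) :
    μH[1] {y ∈ g '' Set.Icc 0 1 | 1 < {t ∈ Set.Icc (0:ℝ) 1 | g t = y}.encard} = 0 :=
  statement_11_general g hrect hlen
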